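/- Let A be a continuous matrix-valued function on an interval I containing t₀, and equip the matrices with an operator norm induced by a vector norm, so that ‖M·N‖ ≤ ‖M‖·‖N‖. Then for every n ≥ 0 and every t ∈ I, the iterated Peano–Baker integral satisfies the bound ‖I_n(t)‖ ≤ (1/n!) · (|∫_{t₀}^t ‖A(τ)‖ dτ|)^n. -/

import Mathlib

/-! By induction on `n`: with `G τ = ∫_{t₀}^τ ‖A‖`, submultiplicativity gives
`‖I_{n+1}(t)‖ ≤ |∫_{t₀}^t |G τ|^n / n! · ‖A τ‖ dτ|`, and the substitution `u = G τ` turns the right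
side into `|∫_0^{G t} |u|^n / n! du| = |G t|^{n+1} / (n+1)!`. -/

-- Equip matrices with the operator norm induced by the `ℓ∞` vector norm; this norm is
-- submultiplicative: `‖M * N‖ ≤ ‖M‖ * ‖N‖`.
attribute [local instance] Matrix.linftyOpNormedAddCommGroup Matrix.linftyOpNormedRing
  Matrix.linftyOpNormedAlgebra

/-- The iterated Peano–Baker integrals: `pbIter A t₀ 0 = 1` (identity matrix) and
`pbIter A t₀ (n+1) t = ∫_{t₀}^t A τ * pbIter A t₀ n τ dτ`. -/
noncomputable def pbIter {d : ℕ} (A : ℝ → Matrix (Fin d) (Fin d) ℝ) (t₀ : ℝ) :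
    ℕ → ℝ → Matrix (Fin d) (Fin d) ℝ
  | 0 => fun _ => 1
  | n + 1 => fun t => ∫ τ in t₀..t, A τ * pbIter A t₀ n τ

open intervalIntegral MeasureTheory Set
open scoped Interval Nat Topology

theorem Matrix.linfty_opNorm_one_le {n : Type*} [Fintype n] [DecidableEq n] :
    ‖(1 : Matrix n n ℝ)‖ ≤ 1 := by
  rw [← Matrix.diagonal_one, Matrix.linfty_opNorm_diagonal]
  exact (pi_norm_const_le (1 : ℝ)).trans_eq norm_one

theorem integral_comp_primitive_mul {f g : ℝ → ℝ} {a b : ℝ} (hf : ContinuousOn f [[a, b]])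
    (hg : Continuous g) :
    ∫ x in a..b, g (∫ y in a..x, f y) * f x = ∫ u in 0..∫ y in a..b, f y, g u := by
  have hderiv : ∀ x ∈ Ioo (min a b) (max a b),
      HasDerivWithinAt (fun x => ∫ y in a..x, f y) (f x) (Ioi x) x := fun x hx =>
    have hx_nhds : [[a, b]] ∈ 𝓝 x := Icc_mem_nhds hx.1 hx.2
    (integral_hasDerivAt_right
      (hf.mono (uIcc_subset_uIcc_left (Ioo_subset_Icc_self hx))).intervalIntegrable
      ⟨_, hx_nhds, hf.aestronglyMeasurable measurableSet_uIcc⟩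
      (hf.continuousAt hx_nhds)).hasDerivWithinAt
  simpa using integral_comp_mul_deriv'' (continuousOn_primitive_interval hf.integrableOn_uIcc)
    hderiv hf hg.continuousOn

theorem abs_integral_abs_pow (c : ℝ) (n : ℕ) :
    |∫ x in 0..c, |x| ^ n| = |c| ^ (n + 1) / (n + 1) := by
  have h := integral_pow_abs_sub_uIoc (a := 0) (b := c) (n := n)
  simp only [sub_zero] at h
  rw [abs_integral_eq_abs_integral_uIoc, h, abs_of_nonneg (by positivity)]

theorem abs_integral_abs_primitive_pow_mul {f : ℝ → ℝ} {a b : ℝ} (hf : ContinuousOn f [[a, b]])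
    (n : ℕ) :
    |∫ x in a..b, (n ! : ℝ)⁻¹ * |∫ y in a..x, f y| ^ n * f x|
      = ((n + 1)! : ℝ)⁻¹ * |∫ y in a..b, f y| ^ (n + 1) := by
  rw [integral_comp_primitive_mul (g := fun u => (n ! : ℝ)⁻¹ * |u| ^ n) hf (by fun_prop),
    intervalIntegral.integral_const_mul, abs_mul, abs_of_pos (by positivity), abs_integral_abs_pow,
    Nat.factorial_succ]
  push_cast
  field_simp

theorem stmt6_general {d : ℕ} (A : ℝ → Matrix (Fin d) (Fin d) ℝ)
    (I : Set ℝ) (hI : I.OrdConnected) (t₀ : ℝ) (ht₀ : t₀ ∈ I)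
    (hA : ContinuousOn A I) :
    ∀ n : ℕ, ∀ t ∈ I,
      ‖pbIter A t₀ n t‖ ≤ ((n.factorial : ℝ))⁻¹ * |∫ τ in t₀..t, ‖A τ‖| ^ n := by
  intro n
  induction n with
  | zero => simpa [pbIter] using fun _ _ => Matrix.linfty_opNorm_one_le
  | succ n ih =>
    intro t ht
    set bound := fun τ => (n ! : ℝ)⁻¹ * |∫ s in t₀..τ, ‖A s‖| ^ n
    have hsub : [[t₀, t]] ⊆ I := hI.uIcc_subset ht₀ ht
    have hAn : ContinuousOn (fun τ => ‖A τ‖) [[t₀, t]] := (hA.mono hsub).norm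
    have hbound : ContinuousOn bound [[t₀, t]] :=
      ((continuous_abs.pow n).const_mul _).comp_continuousOn
        (continuousOn_primitive_interval hAn.integrableOn_uIcc)
    have hstep : ∀ τ ∈ Ι t₀ t, ‖A τ * pbIter A t₀ n τ‖ ≤ bound τ * ‖A τ‖ := fun τ hτ =>
      calc ‖A τ * pbIter A t₀ n τ‖ ≤ ‖A τ‖ * ‖pbIter A t₀ n τ‖ := norm_mul_le _ _
        _ ≤ ‖A τ‖ * bound τ := by gcongr; exact ih τ (hsub (uIoc_subset_uIcc hτ))
        _ = bound τ * ‖A τ‖ := mul_comm _ _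
    calc ‖pbIter A t₀ (n + 1) t‖ ≤ |∫ τ in t₀..t, bound τ * ‖A τ‖| :=
          norm_integral_le_abs_of_norm_le (ae_restrict_of_forall_mem measurableSet_uIoc hstep)
            (hbound.mul hAn).intervalIntegrable
      _ = ((n + 1)! : ℝ)⁻¹ * |∫ τ in t₀..t, ‖A τ‖| ^ (n + 1) :=
          abs_integral_abs_primitive_pow_mul hAn n

theorem stmt6 {d : ℕ} (hd : 1 ≤ d) (A : ℝ → Matrix (Fin d) (Fin d) ℝ)
    (I : Set ℝ) (hI : I.OrdConnected) (t₀ : ℝ) (ht₀ : t₀ ∈ I)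
    (hA : ContinuousOn A I) :
    ∀ n : ℕ, ∀ t ∈ I,
      ‖pbIter A t₀ n t‖ ≤ ((n.factorial : ℝ))⁻¹ * |∫ τ in t₀..t, ‖A τ‖| ^ n :=
  stmt6_general A I hI t₀ ht₀ hA
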